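/- Let b ≥ 1 and K ≥ 1 be integers and let g ∈ ℂ^K have all entries g_k nonzero. For ω ∈ ℝ define the vector ψ(ω) ∈ F_b^K componentwise by (ψ(ω))_k = ψ̂_{g_k}(ω). Define the finite set F_g = { arg(g_k) + (2π/2^b)·( ⌈ −(2^b·arg(g_k))/(2π) − 1/2 ⌉ + s + 1/2 ) : s = 0, 1, …, 2^b − 1, k = 1, …, K }, which has at most 2^b·K elements. Then sup_{ω ∈ [0, 2π)} |ψ(ω)ᵀ g|² = max_{ω ∈ F_g} |ψ(ω)ᵀ g|², where ψ(ω)ᵀ g = Σ_{k=1}^K (ψ(ω))_k g_k. -/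

import Mathlib

open scoped Real

/-- The ω-beamformer phase
`ψ̂_g(ω) = exp(i·(2π/2^b)·round(−(2^b/(2π))·arg g + (2^b/(2π))·ω))`. -/
noncomputable def psiHat (b : ℕ) (g : ℂ) (ω : ℝ) : ℂ :=
  Complex.exp (Complex.I * ((2 * π / 2 ^ b : ℝ) : ℂ) *
    ((round ((-(2 ^ b / (2 * π)) * Complex.arg g + (2 ^ b / (2 * π)) * ω : ℝ)) : ℤ) : ℂ))

/-- The finite search set
`F_g = { arg(g_k) + (2π/2^b)·(⌈−(2^b·arg(g_k))/(2π) − 1/2⌉ + s + 1/2) :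
  s = 0, …, 2^b − 1, k = 1, …, K }`. -/
noncomputable def searchSet {K : ℕ} (b : ℕ) (g : Fin K → ℂ) : Set ℝ :=
  {x | ∃ s : ℕ, s < 2 ^ b ∧ ∃ k : Fin K,
    x = Complex.arg (g k) + (2 * π / 2 ^ b) *
      ((⌈-(2 ^ b * Complex.arg (g k)) / (2 * π) - 1 / 2⌉ : ℤ) + (s : ℝ) + 1 / 2)}

/-! Each `ψ̂_{g_k}` is a `2π`-periodic, right-continuous step function of `ω` whose jumps sit at
the breakpoints `arg g_k + (2π/2^b)(m - 1/2)`, and `F_g` is exactly the set of these breakpoints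
lying in `[0, 2π)`. Given `ω`, the largest breakpoint `β ≤ ω` over all `k` lies on the same step
as `ω` for every `k`, so `ψ(β) = ψ(ω)`; reducing `β` modulo `2π` lands in `F_g`. Hence every
value of the objective is attained on the finite set `F_g ⊆ [0, 2π)`. -/

namespace Beamformer

variable (b : ℕ)

noncomputable def phaseCoord (θ ω : ℝ) : ℝ := -(2 ^ b / (2 * π)) * θ + (2 ^ b / (2 * π)) * ω

-- `round (phaseCoord b θ ω) = m` exactly for `ω ∈ [breakpoint b θ m, breakpoint b θ (m + 1))`.
noncomputable def breakpoint (θ : ℝ) (m : ℤ) : ℝ := θ + (2 * π / 2 ^ b) * (m - 1 / 2)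

lemma psiHat_eq (g : ℂ) (ω : ℝ) :
    psiHat b g ω = Complex.exp (Complex.I * ((2 * π / 2 ^ b : ℝ) : ℂ) *
      (round (phaseCoord b (Complex.arg g) ω) : ℂ)) := rfl

lemma phaseCoord_strictMono (θ : ℝ) : StrictMono (phaseCoord b θ) := fun x y h => by
  unfold phaseCoord
  gcongr

lemma phaseCoord_breakpoint (θ : ℝ) (m : ℤ) : phaseCoord b θ (breakpoint b θ m) = m - 1 / 2 := by
  unfold phaseCoord breakpoint
  field_simp
  ring

lemma phaseCoord_add_two_pi (θ ω : ℝ) :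
    phaseCoord b θ (ω + 2 * π) = phaseCoord b θ ω + 2 ^ b := by
  unfold phaseCoord
  field_simp
  ring

lemma breakpoint_le_iff (θ x : ℝ) (m : ℤ) :
    breakpoint b θ m ≤ x ↔ m - 1 / 2 ≤ phaseCoord b θ x := by
  rw [← phaseCoord_breakpoint, (phaseCoord_strictMono b θ).le_iff_le]

lemma breakpoint_round_phaseCoord_le (θ ω : ℝ) :
    breakpoint b θ (round (phaseCoord b θ ω)) ≤ ω :=
  (breakpoint_le_iff b θ ω _).2 (round_eq_iff.1 rfl).1

lemma round_phaseCoord_eq_of_mem_Icc {θ ω x : ℝ}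
    (hx : x ∈ Set.Icc (breakpoint b θ (round (phaseCoord b θ ω))) ω) :
    round (phaseCoord b θ x) = round (phaseCoord b θ ω) := by
  rw [round_eq_iff]
  exact ⟨(breakpoint_le_iff b θ x _).1 hx.1,
    ((phaseCoord_strictMono b θ).monotone hx.2).trans_lt (round_eq_iff.1 rfl).2⟩

lemma breakpoint_sub_zsmul_two_pi (θ : ℝ) (m j : ℤ) :
    breakpoint b θ m - j • (2 * π) = breakpoint b θ (m - j * 2 ^ b) := by
  unfold breakpoint
  rw [zsmul_eq_mul]
  push_cast
  field_simp
  ring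

lemma round_phaseCoord_add_two_pi (θ ω : ℝ) :
    round (phaseCoord b θ (ω + 2 * π)) = round (phaseCoord b θ ω) + 2 ^ b := by
  simpa [phaseCoord_add_two_pi] using round_add_intCast (phaseCoord b θ ω) (2 ^ b)

lemma psiHat_periodic (g : ℂ) : Function.Periodic (psiHat b g) (2 * π) := fun ω => by
  have hfull : Complex.I * ((2 * π / 2 ^ b : ℝ) : ℂ) * ((2 ^ b : ℤ) : ℂ) = 2 * π * Complex.I := by
    push_cast
    field_simp
  rw [psiHat_eq, psiHat_eq, round_phaseCoord_add_two_pi, Int.cast_add,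
    mul_add, Complex.exp_add, hfull, Complex.exp_two_pi_mul_I, mul_one]

lemma breakpoint_mem_Ico_iff (θ : ℝ) (m : ℤ) :
    breakpoint b θ m ∈ Set.Ico 0 (2 * π) ↔
      m - (⌈-(2 ^ b * θ) / (2 * π) - 1 / 2⌉ + 1) ∈ Set.Ico (0 : ℤ) (2 ^ b) := by
  have h0 : phaseCoord b θ 0 = -(2 ^ b * θ) / (2 * π) - 1 / 2 + 1 / 2 := by
    unfold phaseCoord; ring
  have hlo : 0 ≤ breakpoint b θ m ↔ ⌈-(2 ^ b * θ) / (2 * π) - 1 / 2⌉ ≤ m - 1 := by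
    rw [← (phaseCoord_strictMono b θ).le_iff_le, phaseCoord_breakpoint, h0, Int.ceil_le]
    push_cast
    constructor <;> intro h <;> linarith
  have hhi : breakpoint b θ m < 2 * π ↔ m - 1 - 2 ^ b < ⌈-(2 ^ b * θ) / (2 * π) - 1 / 2⌉ := by
    have h2π : phaseCoord b θ (2 * π) = phaseCoord b θ 0 + 2 ^ b := by
      simpa using phaseCoord_add_two_pi b θ 0
    rw [← (phaseCoord_strictMono b θ).lt_iff_lt, phaseCoord_breakpoint, h2π, h0, Int.lt_ceil]
    push_cast
    constructor <;> intro h <;> linarith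
  simp only [Set.mem_Ico, hlo, hhi]
  omega

lemma breakpoint_add_one_add (θ : ℝ) (M : ℤ) (s : ℕ) :
    breakpoint b θ (M + 1 + s) = θ + (2 * π / 2 ^ b) * (M + (s : ℝ) + 1 / 2) := by
  unfold breakpoint
  push_cast
  ring

section SearchSet

variable {K : ℕ} (g : Fin K → ℂ)

lemma mem_searchSet_iff (x : ℝ) :
    x ∈ searchSet b g ↔
      ∃ k m, breakpoint b (Complex.arg (g k)) m = x ∧ x ∈ Set.Ico 0 (2 * π) := by
  constructor
  · rintro ⟨s, hs, k, rfl⟩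
    refine ⟨k, _, breakpoint_add_one_add b _ _ s, ?_⟩
    rw [← breakpoint_add_one_add, breakpoint_mem_Ico_iff, add_sub_cancel_left, Set.mem_Ico]
    exact ⟨Int.natCast_nonneg s, by exact_mod_cast hs⟩
  · rintro ⟨k, m, rfl, hx⟩
    obtain ⟨hs0, hs⟩ := (breakpoint_mem_Ico_iff b _ m).1 hx
    lift m - (⌈-(2 ^ b * Complex.arg (g k)) / (2 * π) - 1 / 2⌉ + 1) to ℕ using hs0 with s hs_eq
    obtain rfl : m = ⌈-(2 ^ b * Complex.arg (g k)) / (2 * π) - 1 / 2⌉ + 1 + s := by omega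
    exact ⟨s, by exact_mod_cast hs, k, breakpoint_add_one_add b _ _ s⟩

lemma searchSet_subset_Ico : searchSet b g ⊆ Set.Ico 0 (2 * π) := fun x hx => by
  obtain ⟨-, -, -, hx⟩ := (mem_searchSet_iff b g x).1 hx
  exact hx

lemma searchSet_finite : (searchSet b g).Finite := by
  refine (Set.finite_range fun p : Fin (2 ^ b) × Fin K => Complex.arg (g p.2) + (2 * π / 2 ^ b) *
      ((⌈-(2 ^ b * Complex.arg (g p.2)) / (2 * π) - 1 / 2⌉ : ℤ) + (p.1 : ℝ) + 1 / 2)).subset ?_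
  rintro x ⟨s, hs, k, rfl⟩
  exact ⟨(⟨s, hs⟩, k), rfl⟩

lemma searchSet_nonempty (hK : 1 ≤ K) : (searchSet b g).Nonempty :=
  ⟨_, 0, Nat.two_pow_pos b, ⟨0, hK⟩, rfl⟩

lemma exists_mem_searchSet_psiHat_eq (hK : 1 ≤ K) (ω : ℝ) :
    ∃ ω' ∈ searchSet b g, ∀ k, psiHat b (g k) ω' = psiHat b (g k) ω := by
  have : Nonempty (Fin K) := ⟨⟨0, hK⟩⟩
  set t : Fin K → ℝ := fun k =>
    breakpoint b (Complex.arg (g k)) (round (phaseCoord b (Complex.arg (g k)) ω))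
  obtain ⟨k₀, -, hβ⟩ := Finset.exists_mem_eq_sup' Finset.univ_nonempty t
  set β := Finset.univ.sup' Finset.univ_nonempty t
  have hψβ : ∀ k, psiHat b (g k) β = psiHat b (g k) ω := fun k => by
    have hβω : β ≤ ω := Finset.sup'_le _ _ fun k _ => breakpoint_round_phaseCoord_le b _ ω
    rw [psiHat_eq, psiHat_eq, round_phaseCoord_eq_of_mem_Icc b
      ⟨Finset.le_sup' t (Finset.mem_univ k), hβω⟩]
  refine ⟨toIcoMod Real.two_pi_pos 0 β, ?_, fun k => ?_⟩
  · have hβ' : toIcoMod Real.two_pi_pos 0 β = breakpoint b (Complex.arg (g k₀))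
        (round (phaseCoord b (Complex.arg (g k₀)) ω) - toIcoDiv Real.two_pi_pos 0 β * 2 ^ b) := by
      rw [← self_sub_toIcoDiv_zsmul, hβ, breakpoint_sub_zsmul_two_pi]
    exact (mem_searchSet_iff b g _).2 ⟨k₀, _, hβ'.symm, toIcoMod_mem_Ico' _ _⟩
  · rw [← self_sub_toIcoDiv_zsmul, (psiHat_periodic b _).sub_zsmul_eq, hψβ]

end SearchSet

end Beamformer

open Beamformer in
theorem stmt3_general {b K : ℕ} (hK : 1 ≤ K)
    (g : Fin K → ℂ) :
    ∃ ω₀ ∈ searchSet b g,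
      (∀ ω ∈ searchSet b g,
        ‖∑ k, psiHat b (g k) ω * g k‖ ^ 2 ≤
          ‖∑ k, psiHat b (g k) ω₀ * g k‖ ^ 2) ∧
      sSup ((fun ω => ‖∑ k, psiHat b (g k) ω * g k‖ ^ 2) ''
          Set.Ico (0 : ℝ) (2 * π)) =
        ‖∑ k, psiHat b (g k) ω₀ * g k‖ ^ 2 := by
  set f : ℝ → ℝ := fun ω => ‖∑ k, psiHat b (g k) ω * g k‖ ^ 2
  obtain ⟨ω₀, hω₀, hmax⟩ :=
    (searchSet b g).exists_max_image f (searchSet_finite b g) (searchSet_nonempty b g hK)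
  refine ⟨ω₀, hω₀, hmax, IsGreatest.csSup_eq ⟨⟨ω₀, searchSet_subset_Ico b g hω₀, rfl⟩, ?_⟩⟩
  rintro _ ⟨ω, -, rfl⟩
  obtain ⟨ω', hω', hψ⟩ := exists_mem_searchSet_psiHat_eq b g hK ω
  calc f ω = f ω' := by simp only [f, hψ]
    _ ≤ f ω₀ := hmax ω' hω'

theorem stmt3 {b K : ℕ} (hb : 1 ≤ b) (hK : 1 ≤ K)
    (g : Fin K → ℂ) (hg : ∀ k, g k ≠ 0) :
    ∃ ω₀ ∈ searchSet b g,
      (∀ ω ∈ searchSet b g,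
        ‖∑ k, psiHat b (g k) ω * g k‖ ^ 2 ≤
          ‖∑ k, psiHat b (g k) ω₀ * g k‖ ^ 2) ∧
      sSup ((fun ω => ‖∑ k, psiHat b (g k) ω * g k‖ ^ 2) ''
          Set.Ico (0 : ℝ) (2 * π)) =
        ‖∑ k, psiHat b (g k) ω₀ * g k‖ ^ 2 :=
  stmt3_general hK g
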